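/- For every A ∈ ℂ^{n₁+1} and B ∈ ℂ^{n₃+1}, the map F(·,A,B) is conformal on 𝔻: for every z ∈ 𝔻, ‖∂F/∂x(z,A,B)‖ = ‖∂F/∂y(z,A,B)‖ and ⟨∂F/∂x(z,A,B), ∂F/∂y(z,A,B)⟩ = 0, where the partial derivatives are taken in z = x + iy and ⟨·,·⟩ is the Euclidean inner product on ℝ⁴ ≅ ℂ². -/

import Mathlib

open Complex ComplexConjugate Metric

/-- The monic-plus-perturbation polynomial `P_A(z) = z^n + Σ_{i=0}^n aᵢ zⁱ`. -/
noncomputable def Ppoly (n : ℕ) (A : Fin (n + 1) → ℂ) (z : ℂ) : ℂ :=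
  z ^ n + ∑ i : Fin (n + 1), A i * z ^ (i : ℕ)

/-- The Euclidean inner product on `ℝ⁴ ≅ ℂ²`. -/
noncomputable def inner4 (u v : ℂ × ℂ) : ℝ :=
  (u.1 * conj v.1).re + (u.2 * conj v.2).re

/-- The Euclidean norm on `ℝ⁴ ≅ ℂ²`. -/
noncomputable def norm4 (u : ℂ × ℂ) : ℝ :=
  Real.sqrt (Complex.normSq u.1 + Complex.normSq u.2)

/-! The differential of `w ↦ (g₁ w + conj (g₂ w), g₃ w + conj (g₄ w))` at `z` is
`v ↦ (a v + conj (b v), c v + conj (d v))`, where `a, b, c, d` are the complex derivatives. It sends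
`1` and `I` to vectors whose squared lengths differ by `4 Re (ab + cd)` and whose inner product is
`-2 Im (ab + cd)`, so it is conformal as soon as `ab + cd = 0`. For the deformed maps
`ab + cd = z^(n₂ - n₃) P_A Q_B (t₁ t₂ + t₃ t₄)`, and `t₁ t₂ + t₃ t₄` vanishes off `0` because the
undeformed maps are conformal. -/

noncomputable def addConjCLM (a b : ℂ) : ℂ →L[ℝ] ℂ :=
  (ContinuousLinearMap.toSpanSingleton ℂ a).restrictScalars ℝ +
    conjCLE.toContinuousLinearMap.comp ((ContinuousLinearMap.toSpanSingleton ℂ b).restrictScalars ℝ)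

@[simp]
lemma addConjCLM_apply (a b v : ℂ) : addConjCLM a b v = a * v + conj (b * v) := by
  simp [addConjCLM, mul_comm]

lemma HasDerivAt.hasFDerivAt_add_conj {g h : ℂ → ℂ} {a b z : ℂ}
    (hg : HasDerivAt g a z) (hh : HasDerivAt h b z) :
    HasFDerivAt (fun w => g w + conj (h w)) (addConjCLM a b) z := by
  have hconj := conjCLE.toContinuousLinearMap.hasFDerivAt.comp z
    (hh.hasFDerivAt.restrictScalars ℝ)
  exact (hg.hasFDerivAt.restrictScalars ℝ).add hconj

lemma normSq_add_conj_sub_normSq_add_conj_mul_I (a b : ℂ) :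
    normSq (a + conj b) - normSq (a * I + conj (b * I)) = 4 * (a * b).re := by
  simp only [normSq_apply, add_re, add_im, conj_re, conj_im, mul_re, mul_im, I_re, I_im]
  ring

lemma re_add_conj_mul_conj_add_conj_mul_I (a b : ℂ) :
    ((a + conj b) * conj (a * I + conj (b * I))).re = -2 * (a * b).im := by
  simp only [add_re, add_im, conj_re, conj_im, mul_re, mul_im, I_re, I_im]
  ring

lemma norm4_eq_and_inner4_eq_zero_of_mul_add_mul_eq_zero {a b c d : ℂ} (h : a * b + c * d = 0) :
    norm4 (addConjCLM a b 1, addConjCLM c d 1) = norm4 (addConjCLM a b I, addConjCLM c d I) ∧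
      inner4 (addConjCLM a b 1, addConjCLM c d 1) (addConjCLM a b I, addConjCLM c d I) = 0 := by
  have hre : (a * b).re + (c * d).re = 0 := by simpa using congrArg re h
  have him : (a * b).im + (c * d).im = 0 := by simpa using congrArg im h
  simp only [addConjCLM_apply, mul_one, norm4, inner4]
  constructor
  · congr 1
    linarith [normSq_add_conj_sub_normSq_add_conj_mul_I a b,
      normSq_add_conj_sub_normSq_add_conj_mul_I c d]
  · rw [re_add_conj_mul_conj_add_conj_mul_I, re_add_conj_mul_conj_add_conj_mul_I]
    linarith

lemma mul_add_mul_eq_zero_of_pow_mul {n₁ n₂ n₃ n₄ : ℕ} (hsum : n₁ + n₂ = n₃ + n₄)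
    {z t₁ t₂ t₃ t₄ : ℂ} (hz : z ≠ 0)
    (h : z ^ n₁ * t₁ * (z ^ n₂ * t₂) + z ^ n₃ * t₃ * (z ^ n₄ * t₄) = 0) :
    t₁ * t₂ + t₃ * t₄ = 0 := by
  have : z ^ (n₁ + n₂) * (t₁ * t₂ + t₃ * t₄) = 0 := by
    rw [mul_add]
    nth_rewrite 2 [hsum]
    rw [pow_add, pow_add]
    linear_combination h
  exact (mul_eq_zero.mp this).resolve_left (pow_ne_zero _ hz)

/-- At `z = 0` the relation holds because `n₄ - n₁ = n₂ - n₃ > 0`. -/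
lemma deformed_mul_add_mul_eq_zero {n₁ n₂ n₃ n₄ : ℕ} (hsum : n₁ + n₂ = n₃ + n₄) (h32 : n₃ < n₂)
    {z t₁ t₂ t₃ t₄ : ℂ} (h : z ^ n₁ * t₁ * (z ^ n₂ * t₂) + z ^ n₃ * t₃ * (z ^ n₄ * t₄) = 0)
    (P Q : ℂ) :
    P * t₁ * (z ^ (n₂ - n₃) * (Q * t₂)) + Q * t₃ * (z ^ (n₄ - n₁) * (P * t₄)) = 0 := by
  rw [show n₄ - n₁ = n₂ - n₃ by omega]
  rcases eq_or_ne z 0 with rfl | hz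
  · simp [zero_pow (Nat.sub_ne_zero_of_lt h32)]
  · linear_combination P * Q * z ^ (n₂ - n₃) * mul_add_mul_eq_zero_of_pow_mul hsum hz h

theorem deformed_maps_are_conformal_general
    (n₁ n₂ n₃ n₄ : ℕ)
    (h32 : n₃ < n₂)
    (hsum : n₁ + n₂ = n₃ + n₄)
    (t₁ t₂ t₃ t₄ : ℂ → ℂ)
    (hconf : ∀ z ∈ ball (0:ℂ) 1,
      (z ^ n₁ * t₁ z) * (z ^ n₂ * t₂ z) + (z ^ n₃ * t₃ z) * (z ^ n₄ * t₄ z) = 0)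
    (g₁ g₂ g₃ g₄ : (Fin (n₁ + 1) → ℂ) → (Fin (n₃ + 1) → ℂ) → ℂ → ℂ)
    (hg₁ : ∀ A B, ∀ z ∈ ball (0:ℂ) 1,
      HasDerivAt (g₁ A B) (Ppoly n₁ A z * t₁ z) z)
    (hg₂ : ∀ A B, ∀ z ∈ ball (0:ℂ) 1,
      HasDerivAt (g₂ A B) (z ^ (n₂ - n₃) * (Ppoly n₃ B z * t₂ z)) z)
    (hg₃ : ∀ A B, ∀ z ∈ ball (0:ℂ) 1,
      HasDerivAt (g₃ A B) (Ppoly n₃ B z * t₃ z) z)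
    (hg₄ : ∀ A B, ∀ z ∈ ball (0:ℂ) 1,
      HasDerivAt (g₄ A B) (z ^ (n₄ - n₁) * (Ppoly n₁ A z * t₄ z)) z)
    (FF : (Fin (n₁ + 1) → ℂ) → (Fin (n₃ + 1) → ℂ) → ℂ → ℂ × ℂ)
    (hFF : ∀ A B z, FF A B z =
      (g₁ A B z + conj (g₂ A B z), g₃ A B z + conj (g₄ A B z)))
    :
    ∀ (A : Fin (n₁ + 1) → ℂ) (B : Fin (n₃ + 1) → ℂ), ∀ z ∈ ball (0:ℂ) 1,
      norm4 (fderiv ℝ (FF A B) z 1) = norm4 (fderiv ℝ (FF A B) z Complex.I) ∧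
      inner4 (fderiv ℝ (FF A B) z 1) (fderiv ℝ (FF A B) z Complex.I) = 0 := by
  intro A B z hz
  have hderiv : HasFDerivAt (FF A B) _ z :=
    funext (hFF A B) ▸ ((hg₁ A B z hz).hasFDerivAt_add_conj (hg₂ A B z hz)).prodMk
      ((hg₃ A B z hz).hasFDerivAt_add_conj (hg₄ A B z hz))
  simp only [hderiv.fderiv, ContinuousLinearMap.prod_apply]
  exact norm4_eq_and_inner4_eq_zero_of_mul_add_mul_eq_zero
    (deformed_mul_add_mul_eq_zero hsum h32 (hconf z hz) _ _)

/-- Every deformed map `F(·,A,B)` (with `fᵢ(z,A,B) = ∫₀^z hᵢ(ξ,A,B) dξ`)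
is conformal on the unit disk. -/
theorem deformed_maps_are_conformal
    (n₁ n₂ n₃ n₄ : ℕ)
    (h12 : n₁ < n₂) (h13 : n₁ < n₃) (h14 : n₁ < n₄) (h32 : n₃ < n₂)
    (hsum : n₁ + n₂ = n₃ + n₄)
    (t₁ t₂ t₃ t₄ f₁ f₂ f₃ f₄ : ℂ → ℂ)
    (ht₁ : DifferentiableOn ℂ t₁ (ball (0:ℂ) 1))
    (ht₂ : DifferentiableOn ℂ t₂ (ball (0:ℂ) 1))
    (ht₃ : DifferentiableOn ℂ t₃ (ball (0:ℂ) 1))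
    (ht₄ : DifferentiableOn ℂ t₄ (ball (0:ℂ) 1))
    (ht₁0 : t₁ 0 ≠ 0) (ht₂0 : t₂ 0 ≠ 0) (ht₃0 : t₃ 0 ≠ 0) (ht₄0 : t₄ 0 ≠ 0)
    (hf₁ : ∀ z ∈ ball (0:ℂ) 1, HasDerivAt f₁ (z ^ n₁ * t₁ z) z)
    (hf₂ : ∀ z ∈ ball (0:ℂ) 1, HasDerivAt f₂ (z ^ n₂ * t₂ z) z)
    (hf₃ : ∀ z ∈ ball (0:ℂ) 1, HasDerivAt f₃ (z ^ n₃ * t₃ z) z)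
    (hf₄ : ∀ z ∈ ball (0:ℂ) 1, HasDerivAt f₄ (z ^ n₄ * t₄ z) z)
    (hconf : ∀ z ∈ ball (0:ℂ) 1,
      (z ^ n₁ * t₁ z) * (z ^ n₂ * t₂ z) + (z ^ n₃ * t₃ z) * (z ^ n₄ * t₄ z) = 0)
    (g₁ g₂ g₃ g₄ : (Fin (n₁ + 1) → ℂ) → (Fin (n₃ + 1) → ℂ) → ℂ → ℂ)
    (hg₁0 : ∀ A B, g₁ A B 0 = 0) (hg₂0 : ∀ A B, g₂ A B 0 = 0)
    (hg₃0 : ∀ A B, g₃ A B 0 = 0) (hg₄0 : ∀ A B, g₄ A B 0 = 0)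
    (hg₁ : ∀ A B, ∀ z ∈ ball (0:ℂ) 1,
      HasDerivAt (g₁ A B) (Ppoly n₁ A z * t₁ z) z)
    (hg₂ : ∀ A B, ∀ z ∈ ball (0:ℂ) 1,
      HasDerivAt (g₂ A B) (z ^ (n₂ - n₃) * (Ppoly n₃ B z * t₂ z)) z)
    (hg₃ : ∀ A B, ∀ z ∈ ball (0:ℂ) 1,
      HasDerivAt (g₃ A B) (Ppoly n₃ B z * t₃ z) z)
    (hg₄ : ∀ A B, ∀ z ∈ ball (0:ℂ) 1,
      HasDerivAt (g₄ A B) (z ^ (n₄ - n₁) * (Ppoly n₁ A z * t₄ z)) z)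
    (FF : (Fin (n₁ + 1) → ℂ) → (Fin (n₃ + 1) → ℂ) → ℂ → ℂ × ℂ)
    (hFF : ∀ A B z, FF A B z =
      (g₁ A B z + conj (g₂ A B z), g₃ A B z + conj (g₄ A B z)))
    :
    ∀ (A : Fin (n₁ + 1) → ℂ) (B : Fin (n₃ + 1) → ℂ), ∀ z ∈ ball (0:ℂ) 1,
      norm4 (fderiv ℝ (FF A B) z 1) = norm4 (fderiv ℝ (FF A B) z Complex.I) ∧
      inner4 (fderiv ℝ (FF A B) z 1) (fderiv ℝ (FF A B) z Complex.I) = 0 :=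
  deformed_maps_are_conformal_general n₁ n₂ n₃ n₄ h32 hsum t₁ t₂ t₃ t₄ hconf g₁ g₂ g₃ g₄ hg₁ hg₂ hg₃
    hg₄ FF hFF
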